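/- There exists a perfect coloring of H with parameter matrix [[1,2],[1,2]], and any two perfect colorings of H with parameter matrix [[1,2],[1,2]] are equivalent (the coloring is unique up to a graph automorphism of H). -/

import Mathlib

/-!
Send `x, y, z` to the three reflections of the dihedral group `D₃`; since a product of three
reflections is a reflection, this is a homomorphism `G →* D₃`. Right multiplication by the three
reflections sends a rotation to all three reflections and a reflection to all three rotations,
so every vertex has exactly one neighbour in the preimage of `{r i, sr j}`: colouring that
preimage `0` gives a perfect colouring with matrix `[[1,2],[1,2]]`.

Conversely, every vertex is `(yx)^p (zx)^q` or `(yx)^p (zx)^q x`, and the neighbours of a vertex of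
one kind form a triangle of the lattice `ℤ²` of the other kind. A set meeting every triangle
`{(p, q), (p + 1, q), (p, q + 1)}` exactly once is a residue class of `p - q` modulo 3, so every
perfect colouring is one of the nine above. Left translations by `(zx)^n` shift `(i, j)` to
`(i - n, j + n)` and the automorphism `x ↦ y ↦ z ↦ x` shifts `j` alone, so all nine are equivalent.
-/

namespace HexGrid

/-- Relations of the hexagonal grid group: x² = y² = z² = (x·y·z)² = 1. -/
def hexRels : Set (FreeGroup (Fin 3)) :=
  {FreeGroup.of 0 * FreeGroup.of 0,
   FreeGroup.of 1 * FreeGroup.of 1,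
   FreeGroup.of 2 * FreeGroup.of 2,
   FreeGroup.of 0 * FreeGroup.of 1 * FreeGroup.of 2 *
     (FreeGroup.of 0 * FreeGroup.of 1 * FreeGroup.of 2)}

/-- The group `G = ⟨x, y, z ∣ x² = y² = z² = (x·y·z)² = 1⟩`. -/
abbrev G := PresentedGroup hexRels

/-- The generators of `G`. -/
def gen (i : Fin 3) : G := PresentedGroup.of i

def x : G := gen 0
def y : G := gen 1
def z : G := gen 2

lemma gen_mul_self (i : Fin 3) : gen i * gen i = 1 := by
  have h : FreeGroup.of i * FreeGroup.of i ∈ Subgroup.normalClosure hexRels :=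
    Subgroup.subset_normalClosure (by fin_cases i <;> simp [hexRels])
  exact (QuotientGroup.eq_one_iff _).mpr h

/-- The infinite hexagonal grid `H`: the Cayley graph of `G` with respect to `{x, y, z}`;
`u` and `v` are adjacent iff `v ∈ {u·x, u·y, u·z}`. -/
def H : SimpleGraph G where
  Adj u v := u ≠ v ∧ ∃ i : Fin 3, v = u * gen i
  symm := ⟨by
    rintro u v ⟨hne, i, rfl⟩
    exact ⟨hne.symm, i, by rw [mul_assoc, gen_mul_self, mul_one]⟩⟩
  loopless := ⟨by rintro u ⟨hne, -⟩; exact hne rfl⟩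

/-- `φ` is a perfect coloring of `H` with parameter matrix `A`: for every vertex `u` and
every color `j`, the number of neighbors of `u` in `H` colored `j` equals `A (φ u) j`. -/
def IsPerfectColoring {k : ℕ} (φ : G → Fin k) (A : Matrix (Fin k) (Fin k) ℕ) : Prop :=
  ∀ u : G, ∀ j : Fin k, Set.ncard {v : G | H.Adj u v ∧ φ v = j} = A (φ u) j

/-- A matrix is tridiagonal if its entries vanish whenever the indices differ by more
than one. -/
def IsTridiagonal {k : ℕ} (A : Matrix (Fin k) (Fin k) ℕ) : Prop :=
  ∀ i j : Fin k, ((i : ℕ) + 1 < (j : ℕ) ∨ (j : ℕ) + 1 < (i : ℕ)) → A i j = 0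

/-- Two colorings are equivalent if one is obtained from the other by composing with a
graph automorphism of `H`. -/
def EquivColoring {k : ℕ} (φ ψ : G → Fin k) : Prop :=
  ∃ g : H ≃g H, ψ = fun v => φ (g v)

open DihedralGroup Finset

lemma gen_inv (i : Fin 3) : (gen i)⁻¹ = gen i :=
  inv_eq_of_mul_eq_one_right (gen_mul_self i)

lemma xyz_mul_xyz : x * y * z * (x * y * z) = 1 :=
  PresentedGroup.one_of_mem (by simp [hexRels])

lemma mul_x_mul_x (g : G) : g * x * x = g := by rw [mul_assoc, x, gen_mul_self, mul_one]

lemma toDihedral_rels :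
    ∀ r ∈ hexRels, FreeGroup.lift (fun i : Fin 3 => (sr (i : ℕ) : DihedralGroup 3)) r = 1 := by
  simp only [hexRels, Set.mem_insert_iff, Set.mem_singleton_iff]
  rintro _ (rfl | rfl | rfl | rfl) <;> decide

def toDihedral : G →* DihedralGroup 3 := PresentedGroup.toGroup toDihedral_rels

lemma toDihedral_gen (i : Fin 3) : toDihedral (gen i) = sr (i : ℕ) :=
  PresentedGroup.toGroup.of toDihedral_rels

lemma gen_injective : Function.Injective gen := fun i j h => by
  have hsr : ∀ i j : Fin 3, (sr (i : ℕ) : DihedralGroup 3) = sr (j : ℕ) → i = j := by decide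
  exact hsr i j (by rw [← toDihedral_gen, ← toDihedral_gen, h])

lemma gen_ne_one (i : Fin 3) : gen i ≠ 1 := fun h => by
  have := congrArg toDihedral h
  rw [toDihedral_gen, map_one] at this
  cases this

lemma adj_iff {u v : G} : H.Adj u v ↔ ∃ i, v = u * gen i :=
  ⟨fun h => h.2, fun ⟨i, hi⟩ => ⟨fun huv => gen_ne_one i (by simpa [huv] using hi), i, hi⟩⟩

lemma ncard_adj_eq {α : Type*} [DecidableEq α] (φ : G → α) (u : G) (j : α) :
    {v | H.Adj u v ∧ φ v = j}.ncard = #{i | φ (u * gen i) = j} := by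
  classical
  have hset : {v | H.Adj u v ∧ φ v = j} =
      (({i | φ (u * gen i) = j} : Finset (Fin 3)).image (u * gen ·) : Set G) := by
    ext v
    simp only [adj_iff, Set.mem_ofPred_eq, coe_image, coe_filter, mem_univ, true_and,
      Set.mem_image]
    constructor
    · rintro ⟨⟨i, rfl⟩, hj⟩
      exact ⟨i, hj, rfl⟩
    · rintro ⟨i, hj, rfl⟩
      exact ⟨⟨i, rfl⟩, hj⟩
  rw [hset, Set.ncard_coe_finset,
    card_image_of_injective _ fun i j hij => gen_injective (mul_left_cancel hij)]

lemma matrix_12_12_apply (a j : Fin 2) :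
    (!![1,2;1,2] : Matrix (Fin 2) (Fin 2) ℕ) a j = if j = 0 then 1 else 2 := by
  fin_cases a <;> fin_cases j <;> rfl

lemma isPerfectColoring_12_12_iff {ψ : G → Fin 2} :
    IsPerfectColoring ψ !![1,2;1,2] ↔ ∀ u, #{i | ψ (u * gen i) = 0} = 1 := by
  refine ⟨fun h u => ?_, fun h u j => ?_⟩
  · simpa only [ncard_adj_eq, matrix_12_12_apply, if_pos] using h u 0
  rw [ncard_adj_eq, matrix_12_12_apply]
  fin_cases j
  · simpa using h u
  · have hsplit := card_filter_add_card_filter_not (s := univ) fun i => ψ (u * gen i) = 0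
    have hne : ∀ a : Fin 2, ¬a = 0 ↔ a = 1 := by decide
    simp only [hne, h u, card_univ, Fintype.card_fin] at hsplit
    simp only [Fin.mk_one, Fin.isValue, one_ne_zero, if_false]
    omega

lemma fin_two_eq_of_eq_zero_iff {a b : Fin 2} (h : a = 0 ↔ b = 0) : a = b := by
  revert a b
  decide

lemma commute_yx_zx : Commute (y * x) (z * x) := by
  have hx : x⁻¹ = x := gen_inv 0
  have hy : y⁻¹ = y := gen_inv 1
  have hz : z⁻¹ = z := gen_inv 2
  have hzxy : z * x * y * (z * x * y) = 1 :=
    calc _ = z * (x * y * z * (x * y * z)) * z⁻¹ := by group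
      _ = 1 := by rw [xyz_mul_xyz]; group
  have h : z * x * y = y * x * z :=
    calc z * x * y = (z * x * y)⁻¹ := (inv_eq_of_mul_eq_one_right hzxy).symm
      _ = y * x * z := by simp only [mul_inv_rev, hx, hy, hz, mul_assoc]
  calc y * x * (z * x) = (y * x * z) * x := by group
    _ = z * x * (y * x) := by rw [← h]; group

def black (p q : ℤ) : G := (y * x) ^ p * (z * x) ^ q

def white (p q : ℤ) : G := black p q * x

lemma black_mul_yx (p q : ℤ) : black p q * (y * x) = black (p + 1) q := by
  rw [black, black, mul_assoc, ((commute_yx_zx.zpow_right q).symm).eq, ← mul_assoc,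
    zpow_add_one]

lemma black_mul_zx (p q : ℤ) : black p q * (z * x) = black p (q + 1) := by
  rw [black, black, mul_assoc, zpow_add_one]

lemma black_mul_x (p q : ℤ) : black p q * x = white p q := rfl

lemma black_mul_y (p q : ℤ) : black p q * y = white (p + 1) q := by
  rw [white, ← black_mul_yx, ← mul_assoc, mul_x_mul_x]

lemma black_mul_z (p q : ℤ) : black p q * z = white p (q + 1) := by
  rw [white, ← black_mul_zx, ← mul_assoc, mul_x_mul_x]

lemma white_mul_x (p q : ℤ) : white p q * x = black p q := mul_x_mul_x _

lemma white_mul_y (p q : ℤ) : white p q * y = black (p - 1) q := by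
  have h := black_mul_yx (p - 1) q
  rw [sub_add_cancel] at h
  rw [white, ← h, ← mul_assoc, mul_x_mul_x, mul_assoc, y, gen_mul_self, mul_one]

lemma white_mul_z (p q : ℤ) : white p q * z = black p (q - 1) := by
  have h := black_mul_zx p (q - 1)
  rw [sub_add_cancel] at h
  rw [white, ← h, ← mul_assoc, mul_x_mul_x, mul_assoc, z, gen_mul_self, mul_one]

lemma exists_eq_black_or_white (g : G) : ∃ p q, g = black p q ∨ g = white p q := by
  have step : ∀ g (i : Fin 3), (∃ p q, g = black p q ∨ g = white p q) →
      ∃ p q, g * gen i = black p q ∨ g * gen i = white p q := by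
    rintro g i ⟨p, q, rfl | rfl⟩ <;> fin_cases i
    exacts [⟨p, q, .inr (black_mul_x p q)⟩, ⟨p + 1, q, .inr (black_mul_y p q)⟩,
      ⟨p, q + 1, .inr (black_mul_z p q)⟩, ⟨p, q, .inl (white_mul_x p q)⟩,
      ⟨p - 1, q, .inl (white_mul_y p q)⟩, ⟨p, q - 1, .inl (white_mul_z p q)⟩]
  have hg : g ∈ Subgroup.closure (Set.range gen) := by
    rw [show Set.range gen = Set.range PresentedGroup.of from rfl,
      PresentedGroup.closure_range_of]
    trivial
  induction hg using Subgroup.closure_induction_right with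
  | one => exact ⟨0, 0, .inl (by simp [black])⟩
  | mul_right g _ _ hi ih => obtain ⟨i, rfl⟩ := hi; exact step g i ih
  | mul_inv_cancel g _ _ hi ih => obtain ⟨i, rfl⟩ := hi; rw [gen_inv]; exact step g i ih

lemma toDihedral_yx : toDihedral (y * x) = r (-1) := by
  rw [map_mul, y, x, toDihedral_gen, toDihedral_gen]
  decide

lemma toDihedral_zx : toDihedral (z * x) = r 1 := by
  rw [map_mul, z, x, toDihedral_gen, toDihedral_gen]
  decide

lemma toDihedral_black (p q : ℤ) : toDihedral (black p q) = r (q - p) := by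
  rw [black, map_mul, map_zpow, map_zpow, toDihedral_yx, toDihedral_zx, r_zpow, r_zpow, r_mul_r]
  congr 1
  push_cast
  ring

lemma toDihedral_white (p q : ℤ) : toDihedral (white p q) = sr (p - q) := by
  rw [white, map_mul, toDihedral_black, x, toDihedral_gen, r_mul_sr]
  congr 1
  push_cast [Fin.val_zero]
  ring

lemma exists_iff_of_sum_consecutive_eq_one {f : ℤ → ℕ}
    (h : ∀ d, f d + f (d + 1) + f (d + 2) = 1) :
    ∃ c : ZMod 3, ∀ d, f d = 1 ↔ (d : ZMod 3) = c := by
  have periodic : Function.Periodic f 3 := fun d => by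
    have := h d
    have := h (d + 1)
    grind
  obtain ⟨d₀, hd₀⟩ : ∃ d₀, f d₀ = 1 := by
    by_contra! hf
    have := h 0
    have := hf 0
    have := hf 1
    have := hf 2
    grind
  refine ⟨d₀, fun d => ?_⟩
  have hd : f d = f (d₀ + (d - d₀) % 3) := by
    rw [← periodic.int_mul ((d - d₀) / 3) (d₀ + (d - d₀) % 3), Int.cast_id]
    congr 1
    omega
  rw [hd, ZMod.intCast_eq_intCast_iff_dvd_sub, Int.dvd_iff_emod_eq_zero]
  have := h d₀
  have hm : (d - d₀) % 3 = 0 ∨ (d - d₀) % 3 = 1 ∨ (d - d₀) % 3 = 2 := by omega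
  rcases hm with hm | hm | hm <;> simp only [hm, add_zero] <;> omega

lemma exists_iff_of_sum_upTriangle_eq_one {f : ℤ → ℤ → ℕ}
    (h : ∀ p q, f p q + f (p + 1) q + f p (q + 1) = 1) :
    ∃ c : ZMod 3, ∀ p q, f p q = 1 ↔ ((p - q : ℤ) : ZMod 3) = c := by
  -- `f p q = 1` rules out `f (p + 1) q` and, through the triangles at `(p, q - 1)`,
  -- `(p + 1, q - 1)`, `(p + 2, q - 1)`, also `f (p + 2) q`; the triangle at `(p + 1, q)` then
  -- forces `f (p + 1) (q + 1) = 1`. Conversely `f (p + 1) (q + 1) = 1` rules out `f (p + 1) q`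
  -- and `f p (q + 1)`, so the triangle at `(p, q)` forces `f p q = 1`.
  have diag : ∀ p q, f (p + 1) (q + 1) = f p q := fun p q => by
    have := h p q
    have := h (p + 1) q
    have := h p (q + 1)
    have := h p (q - 1)
    have := h (p + 1) (q - 1)
    have := h (p + 2) (q - 1)
    grind
  have hdiff : ∀ p q, f p q = f (p - q) 0 := fun p q => by
    have hper : Function.Periodic (fun k => f (p - q + k) k) 1 := fun k => by
      simpa [add_assoc] using diag (p - q + k) k
    simpa using hper.int_mul q 0
  obtain ⟨c, hc⟩ := exists_iff_of_sum_consecutive_eq_one (f := fun d => f d 0) fun d => by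
    have := h (d + 1) 0
    have := hdiff (d + 1) 1
    grind
  exact ⟨c, fun p q => by rw [hdiff, hc]⟩

lemma exists_iff_of_sum_downTriangle_eq_one {f : ℤ → ℤ → ℕ}
    (h : ∀ p q, f p q + f (p - 1) q + f p (q - 1) = 1) :
    ∃ c : ZMod 3, ∀ p q, f p q = 1 ↔ ((q - p : ℤ) : ZMod 3) = c := by
  obtain ⟨c, hc⟩ := exists_iff_of_sum_upTriangle_eq_one (f := fun p q => f (-p) (-q))
    fun p q => by simpa only [neg_add'] using h (-p) (-q)
  exact ⟨c, fun p q => by simpa only [neg_neg, neg_sub_neg] using hc (-p) (-q)⟩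

def dihedralColoring (i j : ZMod 3) (g : G) : Fin 2 :=
  if toDihedral g = r i ∨ toDihedral g = sr j then 0 else 1

lemma dihedralColoring_eq_zero_iff {i j : ZMod 3} {g : G} :
    dihedralColoring i j g = 0 ↔ toDihedral g = r i ∨ toDihedral g = sr j := by
  unfold dihedralColoring
  split_ifs with h <;> simp [h]

lemma isPerfectColoring_dihedralColoring (i j : ZMod 3) :
    IsPerfectColoring (dihedralColoring i j) !![1,2;1,2] := by
  rw [isPerfectColoring_12_12_iff]
  intro u
  simp only [dihedralColoring_eq_zero_iff, map_mul, toDihedral_gen]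
  generalize toDihedral u = d
  revert d i j
  decide

lemma exists_eq_dihedralColoring {ψ : G → Fin 2} (hψ : IsPerfectColoring ψ !![1,2;1,2]) :
    ∃ i j, ψ = dihedralColoring i j := by
  set ind : G → ℕ := fun v => if ψ v = 0 then 1 else 0 with hind
  have hsum : ∀ u, ind (u * x) + ind (u * y) + ind (u * z) = 1 := fun u => by
    have := isPerfectColoring_12_12_iff.mp hψ u
    rwa [card_filter, Fin.sum_univ_three] at this
  obtain ⟨j, hj⟩ := exists_iff_of_sum_upTriangle_eq_one (f := fun p q => ind (white p q))
    fun p q => by simpa only [black_mul_x, black_mul_y, black_mul_z] using hsum (black p q)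
  obtain ⟨i, hi⟩ := exists_iff_of_sum_downTriangle_eq_one (f := fun p q => ind (black p q))
    fun p q => by simpa only [white_mul_x, white_mul_y, white_mul_z] using hsum (white p q)
  refine ⟨i, j, funext fun g => fin_two_eq_of_eq_zero_iff ?_⟩
  rw [dihedralColoring_eq_zero_iff]
  obtain ⟨p, q, rfl | rfl⟩ := exists_eq_black_or_white g
  · simpa [hind, toDihedral_black] using hi p q
  · simpa [hind, toDihedral_white] using hj p q

lemma EquivColoring.refl {k : ℕ} {φ : G → Fin k} : EquivColoring φ φ :=
  ⟨RelIso.refl _, rfl⟩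

lemma EquivColoring.trans {k : ℕ} {φ ψ χ : G → Fin k} (h₁ : EquivColoring φ ψ)
    (h₂ : EquivColoring ψ χ) : EquivColoring φ χ := by
  obtain ⟨g₁, rfl⟩ := h₁
  obtain ⟨g₂, rfl⟩ := h₂
  exact ⟨g₂.trans g₁, rfl⟩

def leftMulIso (g : G) : H ≃g H where
  toEquiv := Equiv.mulLeft g
  map_rel_iff' {u v} := by simp [adj_iff, mul_assoc]

def isoOfMulEquiv (e : G ≃* G) (σ : Equiv.Perm (Fin 3)) (he : ∀ i, e (gen i) = gen (σ i)) :
    H ≃g H where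
  toEquiv := e.toEquiv
  map_rel_iff' {u v} := by
    simp only [adj_iff, MulEquiv.toEquiv_eq_coe, EquivLike.coe_coe]
    constructor
    · rintro ⟨i, hi⟩
      refine ⟨σ.symm i, e.injective ?_⟩
      rw [hi, map_mul, he, Equiv.apply_symm_apply]
    · rintro ⟨i, rfl⟩
      exact ⟨σ i, by rw [map_mul, he]⟩

lemma rot_rels : ∀ r ∈ hexRels, FreeGroup.lift (fun i => gen (i + 1)) r = 1 := by
  simp only [hexRels, Set.mem_insert_iff, Set.mem_singleton_iff]
  rintro _ (rfl | rfl | rfl | rfl) <;> simp only [map_mul, FreeGroup.lift_apply_of]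
  · exact gen_mul_self 1
  · exact gen_mul_self 2
  · exact gen_mul_self 0
  · calc y * z * x * (y * z * x) = x⁻¹ * (x * y * z * (x * y * z)) * x := by group
      _ = 1 := by rw [xyz_mul_xyz]; group

def rot : G →* G := PresentedGroup.toGroup rot_rels

lemma rot_gen (i : Fin 3) : rot (gen i) = gen (i + 1) := PresentedGroup.toGroup.of rot_rels

lemma rot_comp_rot_comp_rot : rot.comp (rot.comp rot) = MonoidHom.id G :=
  PresentedGroup.ext fun i => by
    simp only [MonoidHom.comp_apply, MonoidHom.id_apply]
    rw [show PresentedGroup.of i = gen i from rfl, rot_gen, rot_gen, rot_gen]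
    congr 1
    fin_cases i <;> rfl

def rotEquiv : G ≃* G :=
  MonoidHom.toMulEquiv rot (rot.comp rot)
    (by rw [MonoidHom.comp_assoc]; exact rot_comp_rot_comp_rot) rot_comp_rot_comp_rot

def rotIso : H ≃g H := isoOfMulEquiv rotEquiv (Equiv.addRight 1) rot_gen

lemma toDihedral_rot (g : G) : toDihedral (rot g) = r 1 * toDihedral g * (r 1)⁻¹ := by
  have : toDihedral.comp rot = (MulAut.conj (r 1)).toMonoidHom.comp toDihedral :=
    PresentedGroup.ext fun i => by
      simp only [MonoidHom.comp_apply]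
      rw [show PresentedGroup.of i = gen i from rfl, rot_gen, toDihedral_gen, toDihedral_gen]
      revert i
      decide
  exact DFunLike.congr_fun this g

lemma equivColoring_dihedralColoring_translate (i j : ZMod 3) (n : ℤ) :
    EquivColoring (dihedralColoring i j) (dihedralColoring (i - n) (j + n)) := by
  refine ⟨leftMulIso ((z * x) ^ n), funext fun v => fin_two_eq_of_eq_zero_iff ?_⟩
  change _ ↔ dihedralColoring i j ((z * x) ^ n * v) = 0
  rw [dihedralColoring_eq_zero_iff, dihedralColoring_eq_zero_iff, map_mul, map_zpow,
    toDihedral_zx, r_one_zpow]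
  generalize toDihedral v = d
  generalize (n : ZMod 3) = k
  revert d k i j
  decide

lemma equivColoring_dihedralColoring_rotate (i j : ZMod 3) :
    EquivColoring (dihedralColoring i j) (dihedralColoring i (j - 1)) := by
  refine ⟨rotIso, funext fun v => fin_two_eq_of_eq_zero_iff ?_⟩
  change _ ↔ dihedralColoring i j (rot v) = 0
  rw [dihedralColoring_eq_zero_iff, dihedralColoring_eq_zero_iff, toDihedral_rot]
  generalize toDihedral v = d
  revert d i j
  decide

lemma equivColoring_dihedralColoring_rotate_pow (i j : ZMod 3) (m : ℕ) :
    EquivColoring (dihedralColoring i j) (dihedralColoring i (j - m)) := by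
  induction m with
  | zero => simpa using EquivColoring.refl
  | succ m ih =>
    simpa [sub_sub] using ih.trans (equivColoring_dihedralColoring_rotate i (j - m))

lemma equivColoring_dihedralColoring (i j i' j' : ZMod 3) :
    EquivColoring (dihedralColoring i j) (dihedralColoring i' j') := by
  simpa using (equivColoring_dihedralColoring_translate i j (i - i').val).trans
    (equivColoring_dihedralColoring_rotate_pow _ _ (j + (i - i') - j').val)

/-- There is a perfect coloring of `H` with parameter matrix `[[1,2],[1,2]]`, and it is
unique up to equivalence. -/
theorem coloring_12_12 :
    (∃ φ : G → Fin 2, IsPerfectColoring φ !![1,2;1,2]) ∧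
    ∀ φ ψ : G → Fin 2, IsPerfectColoring φ !![1,2;1,2] → IsPerfectColoring ψ !![1,2;1,2] →
      EquivColoring φ ψ := by
  refine ⟨⟨_, isPerfectColoring_dihedralColoring 0 0⟩, fun φ ψ hφ hψ => ?_⟩
  obtain ⟨i, j, rfl⟩ := exists_eq_dihedralColoring hφ
  obtain ⟨i', j', rfl⟩ := exists_eq_dihedralColoring hψ
  exact equivColoring_dihedralColoring i j i' j'

end HexGrid
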